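/- Let A = (a_{ij}) be an n×n real matrix such that D(A) belongs to the class 𝒟, D(A) is strongly connected, and Δ_A ≠ 0, and write A^# = (α_{ij}). If vertices i and j are maximally matchable in D(A), then α_{ij} ≠ 0. -/

import Mathlib

open Matrix

/-- Adjacency in a digraph given by relation `G`: a 2-cycle between distinct `i` and `j`. -/
def Adjd {n : ℕ} (G : Fin n → Fin n → Prop) (i j : Fin n) : Prop :=
  i ≠ j ∧ G i j ∧ G j i

/-- `G` is a simple symmetric digraph: no loops and edges come in both directions. -/
def IsSSD {n : ℕ} (G : Fin n → Fin n → Prop) : Prop :=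
  (∀ i, ¬ G i i) ∧ ∀ i j, G i j → G j i

/-- A vertex is pendant if it is incident to exactly one 2-cycle. -/
def Pendant {n : ℕ} (G : Fin n → Fin n → Prop) (i : Fin n) : Prop :=
  ∃! j, Adjd G i j

/-- The class 𝒟: simple symmetric digraphs in which every non-pendant vertex is
adjacent to at least one pendant vertex. -/
def InClassD {n : ℕ} (G : Fin n → Fin n → Prop) : Prop :=
  IsSSD G ∧ ∀ i, ¬ Pendant G i → ∃ j, Adjd G i j ∧ Pendant G j

/-- Strong connectivity: a directed path from every vertex to every other vertex. -/
def StronglyConnected {n : ℕ} (G : Fin n → Fin n → Prop) : Prop :=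
  ∀ i j : Fin n, Relation.ReflTransGen G i j

/-- An unordered pair `e` is a 2-cycle of `G`. -/
def IsEdge {n : ℕ} (G : Fin n → Fin n → Prop) (e : Sym2 (Fin n)) : Prop :=
  ∃ i j, e = s(i, j) ∧ Adjd G i j

/-- A matching: a set of pairwise vertex-disjoint 2-cycles. -/
def IsMatching {n : ℕ} (G : Fin n → Fin n → Prop) (M : Finset (Sym2 (Fin n))) : Prop :=
  (∀ e ∈ M, IsEdge G e) ∧
  ∀ e ∈ M, ∀ f ∈ M, e ≠ f → ∀ v : Fin n, v ∈ e → v ∉ f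

/-- A maximum matching: a matching of maximum cardinality. -/
def IsMaxMatching {n : ℕ} (G : Fin n → Fin n → Prop) (M : Finset (Sym2 (Fin n))) : Prop :=
  IsMatching G M ∧ ∀ M', IsMatching G M' → M'.card ≤ M.card

/-- A cycle chain, recorded by its list of (distinct) vertices `i₁, …, i_{m+1}`. -/
def IsCycleChain {n : ℕ} (G : Fin n → Fin n → Prop) (c : List (Fin n)) : Prop :=
  c.Nodup ∧ 2 ≤ c.length ∧ c.Chain' (Adjd G)

/-- A cycle chain from `i` to `j`. -/
def IsCycleChainBtw {n : ℕ} (G : Fin n → Fin n → Prop) (i j : Fin n) (c : List (Fin n)) : Prop :=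
  IsCycleChain G c ∧ c.head? = some i ∧ c.getLast? = some j

/-- The list of 2-cycles of a cycle chain. -/
def chainEdges {n : ℕ} (c : List (Fin n)) : List (Sym2 (Fin n)) :=
  List.zipWith (fun a b => s(a, b)) c c.tail

/-- The cycle chain `c` is alternating with respect to `M`: its 2-cycles are alternately
in `M` and outside `M`, with the first and last 2-cycle in `M` (so its length is odd). -/
def IsAltChain {n : ℕ} (M : Finset (Sym2 (Fin n))) (c : List (Fin n)) : Prop :=
  Odd (chainEdges c).length ∧
  ∀ k (h : k < (chainEdges c).length), ((chainEdges c).get ⟨k, h⟩ ∈ M ↔ Even k)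

/-- The digraph of a square matrix: edge `(i,j)` iff `A i j ≠ 0`. -/
def DA {n : ℕ} (A : Matrix (Fin n) (Fin n) ℝ) : Fin n → Fin n → Prop :=
  fun i j => A i j ≠ 0

/-- The cycle product `a_{ij} a_{ji}` of a 2-cycle. -/
def cycProd {n : ℕ} (A : Matrix (Fin n) (Fin n) ℝ) (e : Sym2 (Fin n)) : ℝ :=
  Sym2.lift ⟨fun i j => A i j * A j i, fun i j => mul_comm _ _⟩ e

/-- The matching product η(M) of a matching `M`. -/
noncomputable def matchProd {n : ℕ} (A : Matrix (Fin n) (Fin n) ℝ)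
    (M : Finset (Sym2 (Fin n))) : ℝ :=
  ∏ e ∈ M, cycProd A e

/-- The (finite) collection of all maximum matchings of `D(A)`. -/
noncomputable def maxMatchings {n : ℕ} (A : Matrix (Fin n) (Fin n) ℝ) :
    Finset (Finset (Sym2 (Fin n))) :=
  {M | IsMaxMatching (DA A) M}.toFinite.toFinset

/-- Δ_A: the sum of the matching products over all maximum matchings of `D(A)`. -/
noncomputable def Delta {n : ℕ} (A : Matrix (Fin n) (Fin n) ℝ) : ℝ :=
  ∑ M ∈ maxMatchings A, matchProd A M

/-- 𝕄(i,j): maximum matchings with respect to which some cycle chain from `i` to `j`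
is an alternating cycle chain. -/
def MMset {n : ℕ} (A : Matrix (Fin n) (Fin n) ℝ) (i j : Fin n) :
    Set (Finset (Sym2 (Fin n))) :=
  {M | IsMaxMatching (DA A) M ∧ ∃ c, IsCycleChainBtw (DA A) i j c ∧ IsAltChain M c}

/-- `i` and `j` are maximally matchable: 𝕄(i,j) ≠ ∅. -/
def MaxMatchable {n : ℕ} (A : Matrix (Fin n) (Fin n) ℝ) (i j : Fin n) : Prop :=
  (MMset A i j).Nonempty

open scoped Classical in
/-- The (unique) alternating cycle chain from `i` to `j`, when it exists. -/
noncomputable def theChain {n : ℕ} (A : Matrix (Fin n) (Fin n) ℝ) (i j : Fin n) :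
    List (Fin n) :=
  if h : ∃ c, IsCycleChainBtw (DA A) i j c ∧ ∃ M ∈ MMset A i j, IsAltChain M c
  then h.choose else []

/-- The path product along a cycle chain: `a_{i₁ i₂} a_{i₂ i₃} ⋯ a_{i_m i_{m+1}}`. -/
def pathProd {n : ℕ} (A : Matrix (Fin n) (Fin n) ℝ) (c : List (Fin n)) : ℝ :=
  (List.zipWith (fun a b => A a b) c c.tail).prod

open scoped Classical in
/-- β_{ij} = (−1)^{(m−1)/2} P_m(i,j) for maximally matchable `i, j`, and `0` otherwise. -/
noncomputable def beta {n : ℕ} (A : Matrix (Fin n) (Fin n) ℝ) (i j : Fin n) : ℝ :=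
  if MaxMatchable A i j then
    (-1 : ℝ) ^ (((theChain A i j).length - 2) / 2) * pathProd A (theChain A i j)
  else 0

/-- β̄_{i,j}(M): product of the cycle products of the 2-cycles of `M` not contained in
the alternating cycle chain from `i` to `j`. -/
noncomputable def betaBar {n : ℕ} (A : Matrix (Fin n) (Fin n) ℝ) (i j : Fin n)
    (M : Finset (Sym2 (Fin n))) : ℝ :=
  ∏ e ∈ M.filter (fun e => e ∉ chainEdges (theChain A i j)), cycProd A e

/-- μ_{ij} = β_{ij} · Σ_{M ∈ 𝕄(i,j)} β̄_{i,j}(M). -/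
noncomputable def mu {n : ℕ} (A : Matrix (Fin n) (Fin n) ℝ) (i j : Fin n) : ℝ :=
  beta A i j * ∑ M ∈ (MMset A i j).toFinite.toFinset, betaBar A i j M

/-- `X` is a group inverse of `A`. -/
def IsGroupInverse {n : ℕ} (A X : Matrix (Fin n) (Fin n) ℝ) : Prop :=
  A * X * A = A ∧ X * A * X = X ∧ A * X = X * A

/-- A tree digraph: strongly connected and all of its cycles have length 2. -/
def IsTreeDigraph {n : ℕ} (G : Fin n → Fin n → Prop) : Prop :=
  StronglyConnected G ∧
  ∀ (a : Fin n) (l : List (Fin n)), (a :: l).Nodup → List.Chain G a l →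
    G ((a :: l).getLast (List.cons_ne_nil a l)) a → (a :: l).length = 2

/-- A star tree digraph: a tree digraph with a center adjacent to every other vertex,
every other vertex being adjacent only to the center. -/
def IsStarTree {n : ℕ} (G : Fin n → Fin n → Prop) : Prop :=
  IsTreeDigraph G ∧
  ∃ c : Fin n, (∀ j, j ≠ c → Adjd G c j) ∧ ∀ i j, Adjd G i j → i = c ∨ j = c

/-- A corona digraph: a simple symmetric digraph in which each non-pendant vertex is
adjacent to exactly one pendant vertex. -/
def IsCorona {n : ℕ} (G : Fin n → Fin n → Prop) : Prop :=
  IsSSD G ∧ ∀ i, ¬ Pendant G i → ∃! j, Adjd G i j ∧ Pendant G j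

/-- 𝕄(i): the maximum matchings in which vertex `i` is matched. -/
noncomputable def MMi {n : ℕ} (A : Matrix (Fin n) (Fin n) ℝ) (i : Fin n) :
    Finset (Finset (Sym2 (Fin n))) :=
  {M | IsMaxMatching (DA A) M ∧ ∃ e ∈ M, i ∈ e}.toFinite.toFinset

/-! In a digraph of class 𝒟 every 2-cycle of a maximum matching contains a pendant vertex, while
the interior vertices of a cycle chain are not pendant. So an alternating cycle chain from `i` to
`j` is either a single 2-cycle at a pendant vertex, or `i, u, v, j` with `i, j` pendant and `u, v`
not.

On the algebraic side, the column of `A` at a pendant vertex `p` adjacent to `u` is a multiple of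
`e_u`, so `AXA = A` forces `AX e_u = e_u`. Writing `X = A X²` and expanding `(A X)_{uc}` over the
neighbours of `u` gives `pendantWeight A u * (X²)_{uu} = 1` and `(X²)_{uv} = 0` for distinct
non-pendant `u, v`. Hence `α_{pu} = a_{pu} (X²)_{uu} ≠ 0` for a pendant `p` adjacent to a
non-pendant `u`, and transposing gives `α_{up} ≠ 0`. For a chain `i, u, v, j` the same
expansion of `(A X)_{uj} = 0` gives `pendantWeight A u * (X²)_{uj} = -a_{uv} (X²)_{vv} a_{vj}`,
which is nonzero, so `α_{ij} = a_{iu} (X²)_{uj} ≠ 0`. -/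

section

variable {n : ℕ} {G : Fin n → Fin n → Prop} {M : Finset (Sym2 (Fin n))}

lemma Adjd.symm {a b : Fin n} (h : Adjd G a b) : Adjd G b a :=
  ⟨h.1.symm, h.2.2, h.2.1⟩

lemma not_pendant_of_adjd {x a b : Fin n} (ha : Adjd G x a)
    (hb : Adjd G x b) (hab : a ≠ b) : ¬ Pendant G x :=
  fun hx => hab (hx.unique ha hb)

lemma IsEdge.exists_eq_adjd {f : Sym2 (Fin n)} (hf : IsEdge G f) {v : Fin n} (hv : v ∈ f) :
    ∃ w, f = s(v, w) ∧ Adjd G v w := by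
  obtain ⟨x, y, rfl, hxy⟩ := hf
  rcases Sym2.mem_iff.mp hv with rfl | rfl
  · exact ⟨y, rfl, hxy⟩
  · exact ⟨x, Sym2.eq_swap, hxy.symm⟩

lemma IsEdge.adjd {a b : Fin n} (h : IsEdge G s(a, b)) : Adjd G a b := by
  obtain ⟨x, y, hxy, hadj⟩ := h
  rcases Sym2.eq_iff.mp hxy with ⟨rfl, rfl⟩ | ⟨rfl, rfl⟩
  exacts [hadj, hadj.symm]

lemma IsMatching.mono {N : Finset (Sym2 (Fin n))} (hM : IsMatching G M) (hNM : N ⊆ M) :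
    IsMatching G N :=
  ⟨fun e he => hM.1 e (hNM he), fun e he f hf => hM.2 e (hNM he) f (hNM hf)⟩

lemma IsMatching.insert_of_forall_notMem {f : Sym2 (Fin n)} (hM : IsMatching G M)
    (hf : IsEdge G f) (hfree : ∀ v ∈ f, ∀ g ∈ M, v ∉ g) : IsMatching G (insert f M) := by
  refine ⟨fun e he => ?_, fun e he g hg heg v hve hvg => ?_⟩
  · rcases Finset.mem_insert.mp he with rfl | he
    exacts [hf, hM.1 e he]
  rcases Finset.mem_insert.mp he with rfl | heM <;> rcases Finset.mem_insert.mp hg with rfl | hgM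
  · exact heg rfl
  · exact hfree v hve g hgM hvg
  · exact hfree v hvg e heM hve
  · exact hM.2 e heM g hgM heg v hve hvg

lemma IsMatching.notMem_of_pendant {p a : Fin n} {e : Sym2 (Fin n)} (hM : IsMatching G M)
    (hp : Pendant G p) (hpa : Adjd G p a) (he : e ∈ M) (hae : a ∈ e) (hpe : p ∉ e) :
    ∀ g ∈ M, p ∉ g := by
  intro g hg hpg
  obtain ⟨w, rfl, hpw⟩ := (hM.1 g hg).exists_eq_adjd hpg
  obtain rfl := hp.unique hpw hpa
  exact hM.2 _ hg e he (fun h => hpe (h ▸ hpg)) w (by simp) hae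

lemma IsMatching.exists_card_eq_succ_of_augmenting {a b p q : Fin n} (hM : IsMatching G M)
    (hab : s(a, b) ∈ M) (hap : Adjd G a p) (hbq : Adjd G b q) (hpq : p ≠ q)
    (hp : ∀ g ∈ M, p ∉ g) (hq : ∀ g ∈ M, q ∉ g) :
    ∃ M', IsMatching G M' ∧ M'.card = M.card + 1 := by
  have hadj : Adjd G a b := (hM.1 _ hab).adjd
  have haq : a ≠ q := fun h => hq _ hab (h ▸ Sym2.mem_mk_left a b)
  have hbp : b ≠ p := fun h => hp _ hab (h ▸ Sym2.mem_mk_right a b)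
  set N := M.erase s(a, b)
  have hfree : ∀ v ∈ ({a, b, p, q} : Finset (Fin n)), ∀ g ∈ N, v ∉ g := by
    intro v hv g hg
    obtain ⟨hgab, hgM⟩ := Finset.mem_erase.mp hg
    simp only [Finset.mem_insert, Finset.mem_singleton] at hv
    rcases hv with rfl | rfl | rfl | rfl
    · exact hM.2 _ hab g hgM hgab.symm v (by simp)
    · exact hM.2 _ hab g hgM hgab.symm v (by simp)
    · exact hp g hgM
    · exact hq g hgM
  have hbqN : s(b, q) ∉ N := fun h => hfree b (by simp) _ h (by simp)
  have hapN : s(a, p) ∉ insert s(b, q) N := by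
    rw [Finset.mem_insert, not_or]
    refine ⟨fun h => ?_, fun h => hfree a (by simp) _ h (by simp)⟩
    rcases Sym2.eq_iff.mp h with ⟨h, -⟩ | ⟨h, -⟩
    exacts [hadj.1 h, haq h]
  have hbqM : IsMatching G (insert s(b, q) N) :=
    (hM.mono (Finset.erase_subset _ _)).insert_of_forall_notMem ⟨b, q, rfl, hbq⟩ fun v hv =>
      hfree v (by rcases Sym2.mem_iff.mp hv with rfl | rfl <;> simp)
  refine ⟨insert s(a, p) (insert s(b, q) N),
    hbqM.insert_of_forall_notMem ⟨a, p, rfl, hap⟩ fun v hv g hg => ?_, ?_⟩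
  · rcases Finset.mem_insert.mp hg with rfl | hg
    · rcases Sym2.mem_iff.mp hv with rfl | rfl <;> simp only [Sym2.mem_iff, not_or]
      exacts [⟨hadj.1, haq⟩, ⟨hbp.symm, hpq⟩]
    · exact hfree v (by rcases Sym2.mem_iff.mp hv with rfl | rfl <;> simp) g hg
  · rw [Finset.card_insert_of_notMem hapN, Finset.card_insert_of_notMem hbqN,
      Finset.card_erase_add_one hab]

lemma InClassD.pendant_of_mem_maxMatching (hD : InClassD G) (hM : IsMaxMatching G M)
    {a b : Fin n} (hab : s(a, b) ∈ M) : Pendant G a ∨ Pendant G b := by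
  by_contra! h
  obtain ⟨ha, hb⟩ := h
  obtain ⟨p, hap, hp⟩ := hD.2 a ha
  obtain ⟨q, hbq, hq⟩ := hD.2 b hb
  have hpab : p ∉ s(a, b) := by
    simp only [Sym2.mem_iff, not_or]
    exact ⟨fun h => ha (h ▸ hp), fun h => hb (h ▸ hp)⟩
  have hqab : q ∉ s(a, b) := by
    simp only [Sym2.mem_iff, not_or]
    exact ⟨fun h => ha (h ▸ hq), fun h => hb (h ▸ hq)⟩
  have hpq : p ≠ q := fun h => (hM.1.1 _ hab).adjd.1 (hp.unique hap.symm (h ▸ hbq.symm))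
  obtain ⟨M', hM', hcard⟩ := hM.1.exists_card_eq_succ_of_augmenting hab hap hbq hpq
    (hM.1.notMem_of_pendant hp hap.symm hab (by simp) hpab)
    (hM.1.notMem_of_pendant hq hbq.symm hab (by simp) hqab)
  have := hM.2 M' hM'
  omega

lemma IsAltChain.mem {c : List (Fin n)} (h : IsAltChain M c)
    (k : ℕ) (hk : k < (chainEdges c).length) (hev : Even k) : (chainEdges c)[k] ∈ M :=
  (h.2 k hk).mpr hev

lemma IsCycleChainBtw.pendant_cases (hD : InClassD G) (hM : IsMaxMatching G M) {i j : Fin n}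
    {c : List (Fin n)} (hc : IsCycleChainBtw G i j c) (halt : IsAltChain M c) :
    (Pendant G i ∧ Adjd G i j) ∨ (Pendant G j ∧ Adjd G j i) ∨
      ∃ u v, Pendant G i ∧ Adjd G i u ∧ ¬ Pendant G u ∧ Adjd G u v ∧ ¬ Pendant G v ∧
        Pendant G j ∧ Adjd G j v := by
  obtain ⟨⟨hnd, hlen, hch⟩, hhead, hlast⟩ := hc
  replace hch : c.IsChain (Adjd G) := hch
  match c, hnd, hlen, hch, hhead, hlast, halt with
  | [a, b], _, _, hch, hhead, hlast, halt =>
    simp only [List.head?_cons, List.getLast?_cons_cons, List.getLast?_singleton,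
      Option.some.injEq] at hhead hlast
    subst i j
    have hab : s(a, b) ∈ M := halt.mem 0 (by simp [chainEdges]) Even.zero
    have hadj : Adjd G a b := List.isChain_pair.mp hch
    rcases hD.pendant_of_mem_maxMatching hM hab with ha | hb
    exacts [Or.inl ⟨ha, hadj⟩, Or.inr (Or.inl ⟨hb, hadj.symm⟩)]
  | [a, b, d], _, _, _, _, _, halt => exact absurd halt.1 (by simp [chainEdges])
  | [a, b, d, e], hnd, _, hch, hhead, hlast, halt =>
    simp only [List.head?_cons, List.getLast?_cons_cons, List.getLast?_singleton,
      Option.some.injEq] at hhead hlast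
    subst i j
    simp only [List.isChain_cons_cons, List.isChain_singleton, and_true] at hch
    simp only [List.nodup_cons, List.mem_cons, List.not_mem_nil, or_false] at hnd
    obtain ⟨hab, hbd, hde⟩ := hch
    have hb : ¬ Pendant G b := not_pendant_of_adjd hab.symm hbd (by tauto)
    have hd : ¬ Pendant G d := not_pendant_of_adjd hbd.symm hde (by tauto)
    have ha : Pendant G a := (hD.pendant_of_mem_maxMatching hM
      (halt.mem 0 (by simp [chainEdges]) Even.zero)).resolve_right hb
    have he : Pendant G e := (hD.pendant_of_mem_maxMatching hM
      (halt.mem 2 (by simp [chainEdges]) (by decide))).resolve_left hd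
    exact Or.inr (Or.inr ⟨b, d, ha, hab, hb, hbd, hd, he, hde.symm⟩)
  | a :: b :: d :: e :: f :: l, hnd, _, hch, _, _, halt =>
    -- the third 2-cycle lies in `M` but joins two interior vertices
    simp only [List.isChain_cons_cons] at hch
    simp only [List.nodup_cons, List.mem_cons, not_or] at hnd
    obtain ⟨-, hbd, hde, hef, -⟩ := hch
    have hd : ¬ Pendant G d := not_pendant_of_adjd hbd.symm hde (by tauto)
    have he : ¬ Pendant G e := not_pendant_of_adjd hde.symm hef (by tauto)
    have hmem : s(d, e) ∈ M := halt.mem 2 (by simp [chainEdges]) (by decide)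
    exact ((hD.pendant_of_mem_maxMatching hM hmem).elim hd he).elim

section Matrix

variable {A : Matrix (Fin n) (Fin n) ℝ}

lemma IsSSD.adjd_of_ne_zero (hG : IsSSD (DA A)) {a b : Fin n} (h : A a b ≠ 0) :
    Adjd (DA A) a b :=
  ⟨fun hab => hG.1 a (hab ▸ h), h, hG.2 a b h⟩

lemma IsSSD.DA_transpose (hG : IsSSD (DA A)) : DA Aᵀ = DA A := by
  funext a b
  exact propext ⟨hG.2 b a, hG.2 a b⟩

lemma Pendant.mul_apply_left (hG : IsSSD (DA A)) {p u : Fin n} (hp : Pendant (DA A) p)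
    (hpu : Adjd (DA A) p u) (B : Matrix (Fin n) (Fin n) ℝ) (c : Fin n) :
    (A * B) p c = A p u * B u c := by
  rw [mul_apply, Finset.sum_eq_single u (fun k _ hku => ?_) (by simp)]
  by_contra hk
  exact hku (hp.unique (hG.adjd_of_ne_zero (left_ne_zero_of_mul hk)) hpu)

lemma Pendant.mul_apply_right (hG : IsSSD (DA A)) {p u : Fin n} (hp : Pendant (DA A) p)
    (hpu : Adjd (DA A) p u) (B : Matrix (Fin n) (Fin n) ℝ) (r : Fin n) :
    (B * A) r p = B r u * A u p := by
  rw [mul_apply, Finset.sum_eq_single u (fun k _ hku => ?_) (by simp)]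
  by_contra hk
  exact hku (hp.unique (hG.adjd_of_ne_zero (right_ne_zero_of_mul hk)).symm hpu)

open Classical in
noncomputable def pendantWeight (A : Matrix (Fin n) (Fin n) ℝ) (u : Fin n) : ℝ :=
  ∑ k with Pendant (DA A) k, A u k * A k u

open Classical in
lemma IsSSD.mul_mul_apply (hG : IsSSD (DA A)) (Y : Matrix (Fin n) (Fin n) ℝ) (s c : Fin n) :
    (A * (A * Y)) s c =
      pendantWeight A s * Y s c + ∑ k with ¬ Pendant (DA A) k, A s k * (A * Y) k c := by
  rw [mul_apply, ← Finset.sum_filter_add_sum_filter_not _ (Pendant (DA A)), pendantWeight,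
    Finset.sum_mul]
  congr 1
  refine Finset.sum_congr rfl fun k hk => ?_
  by_cases hsk : A s k = 0
  · simp [hsk]
  · rw [(Finset.mem_filter.mp hk).2.mul_apply_left hG (hG.adjd_of_ne_zero hsk).symm]
    ring

end Matrix

namespace IsGroupInverse

variable {A X : Matrix (Fin n) (Fin n) ℝ}

lemma mul_mul_self (hX : IsGroupInverse A X) : A * (X * X) = X := by
  rw [← Matrix.mul_assoc, hX.2.2, hX.2.1]

lemma mul_self_mul (hX : IsGroupInverse A X) : X * X * A = X := by
  rw [Matrix.mul_assoc, ← hX.2.2, ← Matrix.mul_assoc, hX.2.1]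

lemma transpose (hX : IsGroupInverse A X) : IsGroupInverse Aᵀ Xᵀ := by
  refine ⟨?_, ?_, ?_⟩ <;> simp only [← transpose_mul, ← Matrix.mul_assoc]
  · rw [hX.1]
  · rw [hX.2.1]
  · rw [hX.2.2]

variable (hX : IsGroupInverse A X) (hD : InClassD (DA A))
include hX hD

lemma mul_apply_of_adjd_pendant {p u : Fin n} (hp : Pendant (DA A) p) (hpu : Adjd (DA A) p u)
    (k : Fin n) : (A * X) k u = if k = u then 1 else 0 := by
  have h := congrFun (congrFun hX.1 k) p
  rw [hp.mul_apply_right hD.1 hpu] at h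
  split_ifs with hku
  · subst hku
    exact (mul_eq_right₀ hpu.2.2).mp h
  · have hkp : A k p = 0 := by
      by_contra hkp
      exact hku (hp.unique (hD.1.adjd_of_ne_zero hkp).symm hpu)
    rw [hkp] at h
    exact (mul_eq_zero.mp h).resolve_right hpu.2.2

lemma apply_eq_zero_of_not_pendant {k c : Fin n} (hk : ¬ Pendant (DA A) k)
    (hc : ¬ Pendant (DA A) c) : X k c = 0 := by
  obtain ⟨q, hkq, hq⟩ := hD.2 k hk
  obtain ⟨p, hcp, hp⟩ := hD.2 c hc
  have h := hX.mul_apply_of_adjd_pendant hD hp hcp.symm q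
  rw [if_neg (fun hqc : q = c => hc (hqc ▸ hq)), hq.mul_apply_left hD.1 hkq.symm] at h
  exact (mul_eq_zero.mp h).resolve_left hkq.2.2

open Classical in
lemma mul_apply_eq_pendantWeight_mul (s c : Fin n) (hc : ¬ Pendant (DA A) c) :
    (A * X) s c = pendantWeight A s * (X * X) s c := by
  have h := hD.1.mul_mul_apply (X * X) s c
  rw [hX.mul_mul_self] at h
  rw [h, Finset.sum_eq_zero fun k hk => ?_, add_zero]
  rw [hX.apply_eq_zero_of_not_pendant hD (Finset.mem_filter.mp hk).2 hc, mul_zero]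

lemma pendantWeight_mul_sq_apply_self {u : Fin n} (hu : ¬ Pendant (DA A) u) :
    pendantWeight A u * (X * X) u u = 1 := by
  obtain ⟨p, hup, hp⟩ := hD.2 u hu
  rw [← hX.mul_apply_eq_pendantWeight_mul hD u u hu,
    hX.mul_apply_of_adjd_pendant hD hp hup.symm, if_pos rfl]

lemma sq_apply_eq_zero {k v : Fin n} (hk : ¬ Pendant (DA A) k) (hv : ¬ Pendant (DA A) v)
    (hkv : k ≠ v) : (X * X) k v = 0 := by
  obtain ⟨p, hvp, hp⟩ := hD.2 v hv
  have h := hX.mul_apply_eq_pendantWeight_mul hD k v hv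
  rw [hX.mul_apply_of_adjd_pendant hD hp hvp.symm, if_neg hkv] at h
  exact (mul_eq_zero.mp h.symm).resolve_left
    (left_ne_zero_of_mul_eq_one (hX.pendantWeight_mul_sq_apply_self hD hk))

lemma apply_ne_zero_of_pendant_left {p u : Fin n} (hp : Pendant (DA A) p)
    (hpu : Adjd (DA A) p u) : X p u ≠ 0 := by
  by_cases hu : Pendant (DA A) u
  · have h := hX.mul_apply_of_adjd_pendant hD hp hpu u
    rw [if_pos rfl, hu.mul_apply_left hD.1 hpu.symm] at h
    exact right_ne_zero_of_mul_eq_one h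
  · rw [← hX.mul_mul_self, hp.mul_apply_left hD.1 hpu]
    exact mul_ne_zero hpu.2.1
      (right_ne_zero_of_mul_eq_one (hX.pendantWeight_mul_sq_apply_self hD hu))

lemma apply_ne_zero_of_pendant_right {p u : Fin n} (hp : Pendant (DA A) p)
    (hpu : Adjd (DA A) p u) : X u p ≠ 0 := by
  have hT := hD.1.DA_transpose
  rw [← hT] at hp hpu hD
  exact hX.transpose.apply_ne_zero_of_pendant_left hD hp hpu

lemma apply_ne_zero_of_pendant_path {i u v j : Fin n} (hi : Pendant (DA A) i)
    (hiu : Adjd (DA A) i u) (hu : ¬ Pendant (DA A) u) (huv : Adjd (DA A) u v)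
    (hv : ¬ Pendant (DA A) v) (hj : Pendant (DA A) j) (hjv : Adjd (DA A) j v) :
    X i j ≠ 0 := by
  classical
  have hXj : ∀ k, X k j = (X * X) k v * A v j := fun k => by
    rw [← hj.mul_apply_right hD.1 hjv, hX.mul_self_mul]
  have hAXuj : (A * X) u j = 0 := by
    rw [hX.2.2, hj.mul_apply_right hD.1 hjv, hX.apply_eq_zero_of_not_pendant hD hu hv, zero_mul]
  have hsum : ∑ k with ¬ Pendant (DA A) k, A u k * X k j = A u v * X v j := by
    refine Finset.sum_eq_single_of_mem v (Finset.mem_filter.mpr ⟨Finset.mem_univ _, hv⟩)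
      fun k hk hkv => ?_
    rw [hXj, hX.sq_apply_eq_zero hD (Finset.mem_filter.mp hk).2 hv hkv, zero_mul, mul_zero]
  have h := hD.1.mul_mul_apply (X * X) u j
  rw [hX.mul_mul_self, hAXuj, hsum, hXj] at h
  have hYuj : (X * X) u j ≠ 0 := by
    intro h0
    rw [h0, mul_zero, zero_add] at h
    exact mul_ne_zero huv.2.1 (mul_ne_zero
      (right_ne_zero_of_mul_eq_one (hX.pendantWeight_mul_sq_apply_self hD hv)) hjv.2.2) h.symm
  rw [← hX.mul_mul_self, hi.mul_apply_left hD.1 hiu]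
  exact mul_ne_zero hiu.2.1 hYuj

end IsGroupInverse

end

theorem group_inverse_entry_ne_zero_of_maxMatchable_general {n : ℕ} (A : Matrix (Fin n) (Fin n) ℝ)
    (hD : InClassD (DA A)) (i j : Fin n) (hm : MaxMatchable A i j) :
    ∀ X, IsGroupInverse A X → X i j ≠ 0 := by
  intro X hX
  obtain ⟨M, hM, c, hc, halt⟩ := hm
  rcases hc.pendant_cases hD hM halt with
    ⟨hi, hij⟩ | ⟨hj, hji⟩ | ⟨u, v, hi, hiu, hu, huv, hv, hj, hjv⟩
  · exact hX.apply_ne_zero_of_pendant_left hD hi hij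
  · exact hX.apply_ne_zero_of_pendant_right hD hj hji
  · exact hX.apply_ne_zero_of_pendant_path hD hi hiu hu huv hv hj hjv

/-- Corollary 3.2: if `i, j` are maximally matchable in `D(A)`, then `α_{ij} ≠ 0`. -/
theorem group_inverse_entry_ne_zero_of_maxMatchable {n : ℕ} (A : Matrix (Fin n) (Fin n) ℝ)
    (hD : InClassD (DA A)) (hSC : StronglyConnected (DA A)) (hΔ : Delta A ≠ 0)
    (i j : Fin n) (hm : MaxMatchable A i j) :
    ∀ X, IsGroupInverse A X → X i j ≠ 0 :=
  group_inverse_entry_ne_zero_of_maxMatchable_general A hD i j hm
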